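/- Let a > 0, G : ℝ → ℝ continuous and even, and let f : [−a,a] → ℝ be Lipschitz with ess inf f' > 0 and f(−a) = −f(a). Then the odd rearrangement f^o satisfies ∫_{−a}^{a} G(f^o(x)) dx = ∫_{−a}^{a} G(f(x)) dx, f^o is odd, f^o(a) = f(a), and ess inf f' ≤ ess inf (f^o)' ≤ ess sup (f^o)' ≤ ess sup f'. -/

import Mathlib

/-!
Lipschitz functions are absolutely continuous, so the a.e. bounds `m ≤ f' ≤ M` integrate to
`m (y - x) ≤ f y - f x ≤ M (y - x)`. Such increment bounds pass to `f⁻¹` with constants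
`1/M, 1/m`, survive the odd symmetrisation `g = (f⁻¹ + (f⁻¹)_*) / 2`, and pass back to its
inverse `f^o` with constants `m, M`, which bounds `(f^o)'`. Since `g` is odd, so is `f^o`.
Finally `|f|` and `|f^o|` are equimeasurable: `{|f| ≤ t}` is `[f⁻¹ (-t), f⁻¹ t]` and
`{|f^o| ≤ t}` is `[-g t, g t]`, intervals of the same length; as `G` is even,
`G ∘ f = G ∘ |f|` and `G ∘ f^o = G ∘ |f^o|` then have the same integral.
-/

open MeasureTheory Set Filter Topology

theorem neg_mem_Icc_neg_self {α : Type*} [AddCommGroup α] [PartialOrder α] [IsOrderedAddMonoid α]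
    {b x : α} (hx : x ∈ Icc (-b) b) : -x ∈ Icc (-b) b :=
  neg_mem_Icc_iff.2 (by rwa [neg_neg])

def SlopeBoundedOn (f : ℝ → ℝ) (s : Set ℝ) (m M : ℝ) : Prop :=
  ∀ x ∈ s, ∀ y ∈ s, x ≤ y → m * (y - x) ≤ f y - f x ∧ f y - f x ≤ M * (y - x)

/-- The paper's `(1/2) h + (1/2) h_*`, where `h_* y = -h (-y)`. -/
noncomputable def oddPart (h : ℝ → ℝ) (y : ℝ) : ℝ := (h y - h (-y)) / 2

theorem oddPart_neg (h : ℝ → ℝ) (y : ℝ) : oddPart h (-y) = -oddPart h y := by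
  simp only [oddPart, neg_neg]
  ring

theorem LipschitzOnWith.integral_eq_sub_of_ae_hasDerivAt {f f' : ℝ → ℝ} {K : NNReal} {a b : ℝ}
    (hab : a ≤ b) (hf : LipschitzOnWith K f (Icc a b))
    (hd : ∀ᵐ x ∂volume.restrict (Icc a b), HasDerivAt f (f' x) x) :
    IntervalIntegrable f' volume a b ∧ ∫ x in a..b, f' x = f b - f a := by
  rw [← uIcc_of_le hab] at hf
  have hac := hf.absolutelyContinuousOnInterval
  have hderiv : deriv f =ᵐ[volume.restrict (uIoc a b)] f' := by
    rw [uIoc_of_le hab]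
    filter_upwards [ae_restrict_of_ae_restrict_of_subset Ioc_subset_Icc_self hd] with x hx
    exact hx.deriv
  refine ⟨hac.intervalIntegrable_deriv.congr_ae hderiv, ?_⟩
  rw [← hac.integral_deriv_eq_sub]
  exact intervalIntegral.integral_congr_ae (ae_imp_of_ae_restrict hderiv.symm)

theorem ae_restrict_Icc_mem_Ioo (a b : ℝ) : ∀ᵐ x ∂volume.restrict (Icc a b), x ∈ Ioo a b := by
  rw [← Measure.restrict_congr_set Ioo_ae_eq_Icc]
  exact ae_restrict_mem measurableSet_Ioo

theorem LipschitzOnWith.ae_abs_le_of_hasDerivAt {f f' : ℝ → ℝ} {K : NNReal} {a b : ℝ}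
    (hf : LipschitzOnWith K f (Icc a b))
    (hd : ∀ᵐ x ∂volume.restrict (Icc a b), HasDerivAt f (f' x) x) :
    ∀ᵐ x ∂volume.restrict (Icc a b), |f' x| ≤ K := by
  filter_upwards [hd, ae_restrict_Icc_mem_Ioo a b] with x hx hxab
  rw [← hx.deriv, ← Real.norm_eq_abs]
  exact norm_deriv_le_of_lipschitzOn (Icc_mem_nhds hxab.1 hxab.2) hf

theorem ae_mem_Icc_essInf_essSup_of_ae_abs_le {α : Type*} [MeasurableSpace α] {μ : Measure α}
    {φ : α → ℝ} {C : ℝ} (h : ∀ᵐ x ∂μ, |φ x| ≤ C) :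
    ∀ᵐ x ∂μ, φ x ∈ Icc (essInf φ μ) (essSup φ μ) := by
  have hbelow : IsBoundedUnder (· ≥ ·) (ae μ) φ :=
    ⟨-C, eventually_map.2 (h.mono fun x hx => (abs_le.1 hx).1)⟩
  have habove : IsBoundedUnder (· ≤ ·) (ae μ) φ :=
    ⟨C, eventually_map.2 (h.mono fun x hx => (abs_le.1 hx).2)⟩
  filter_upwards [ae_essInf_le hbelow, ae_le_essSup habove] with x h₁ h₂ using ⟨h₁, h₂⟩

theorem le_essInf_and_essSup_le_of_ae_mem_Icc {α : Type*} [MeasurableSpace α] {μ : Measure α}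
    [NeZero μ] {φ : α → ℝ} {m M : ℝ} (h : ∀ᵐ x ∂μ, φ x ∈ Icc m M) :
    m ≤ essInf φ μ ∧ essSup φ μ ≤ M := by
  have hbelow : IsBoundedUnder (· ≥ ·) (ae μ) φ := ⟨m, eventually_map.2 (h.mono fun _ hx => hx.1)⟩
  have habove : IsBoundedUnder (· ≤ ·) (ae μ) φ := ⟨M, eventually_map.2 (h.mono fun _ hx => hx.2)⟩
  exact ⟨le_essInf_of_ae_le m (h.mono fun _ hx => hx.1) habove.isCoboundedUnder_ge,
    essSup_le_of_ae_le M (h.mono fun _ hx => hx.2) hbelow.isCoboundedUnder_le⟩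

theorem integral_comp_eq_of_measure_preimage_Iic_eq {α : Type*} [MeasurableSpace α]
    {μ : Measure α} [IsFiniteMeasure μ] {u v : α → ℝ} {F : ℝ → ℝ}
    (hu : AEMeasurable u μ) (hv : AEMeasurable v μ) (hF : Measurable F)
    (huv : ∀ t, μ (u ⁻¹' Iic t) = μ (v ⁻¹' Iic t)) :
    ∫ x, F (u x) ∂μ = ∫ x, F (v x) ∂μ := by
  have hmap : μ.map u = μ.map v := Measure.ext_of_Iic _ _ fun t => by
    rw [Measure.map_apply_of_aemeasurable hu measurableSet_Iic,
      Measure.map_apply_of_aemeasurable hv measurableSet_Iic, huv]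
  rw [← integral_map hu hF.aestronglyMeasurable, hmap, integral_map hv hF.aestronglyMeasurable]

namespace SlopeBoundedOn

variable {f g : ℝ → ℝ} {s t : Set ℝ} {m M : ℝ}

theorem of_lipschitzOnWith {f' : ℝ → ℝ} {K : NNReal} {a b : ℝ}
    (hf : LipschitzOnWith K f (Icc a b))
    (hd : ∀ᵐ x ∂volume.restrict (Icc a b), HasDerivAt f (f' x) x)
    (hmM : ∀ᵐ x ∂volume.restrict (Icc a b), f' x ∈ Icc m M) :
    SlopeBoundedOn f (Icc a b) m M := by
  intro x hx y hy hxy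
  have hsub : Icc x y ⊆ Icc a b := Icc_subset_Icc hx.1 hy.2
  obtain ⟨hint, hFTC⟩ := (hf.mono hsub).integral_eq_sub_of_ae_hasDerivAt hxy
    (ae_restrict_of_ae_restrict_of_subset hsub hd)
  have hmM' := ae_restrict_of_ae_restrict_of_subset hsub hmM
  rw [← hFTC]
  constructor
  · calc m * (y - x) = ∫ _ in x..y, m := by simp [mul_comm]
      _ ≤ ∫ z in x..y, f' z := intervalIntegral.integral_mono_ae_restrict hxy
          intervalIntegrable_const hint (hmM'.mono fun _ hz => hz.1)
  · calc ∫ z in x..y, f' z ≤ ∫ _ in x..y, M := intervalIntegral.integral_mono_ae_restrict hxy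
          hint intervalIntegrable_const (hmM'.mono fun _ hz => hz.2)
      _ = M * (y - x) := by simp [mul_comm]

theorem strictMonoOn (hf : SlopeBoundedOn f s m M) (hm : 0 < m) : StrictMonoOn f s :=
  fun x hx y hy hxy => by nlinarith [(hf x hx y hy hxy.le).1]

theorem rightInvOn (hf : SlopeBoundedOn f s m M) (hm : 0 < m) (hM : 0 < M)
    (hg : MapsTo g t s) (hgf : RightInvOn g f t) : SlopeBoundedOn g t M⁻¹ m⁻¹ := by
  intro x hx y hy hxy
  have hle : g x ≤ g y := by
    by_contra! hlt
    have := hf.strictMonoOn hm (hg hy) (hg hx) hlt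
    rw [hgf hx, hgf hy] at this
    linarith
  have h := hf (g x) (hg hx) (g y) (hg hy) hle
  rw [hgf hx, hgf hy] at h
  rw [inv_mul_eq_div, inv_mul_eq_div, div_le_iff₀ hM, le_div_iff₀ hm]
  constructor <;> linarith [h.1, h.2]

theorem oddPart (hf : SlopeBoundedOn f s m M) (hs : ∀ y ∈ s, -y ∈ s) :
    SlopeBoundedOn (oddPart f) s m M := by
  intro x hx y hy hxy
  have h₁ := hf x hx y hy hxy
  have h₂ := hf (-y) (hs y hy) (-x) (hs x hx) (neg_le_neg hxy)
  rw [neg_sub_neg] at h₂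
  simp only [_root_.oddPart]
  constructor <;> linarith [h₁.1, h₁.2, h₂.1, h₂.2]

theorem mem_Icc_of_hasDerivAt {f' x : ℝ} (hf : SlopeBoundedOn f s m M) (hs : s ∈ 𝓝 x)
    (hd : HasDerivAt f f' x) : f' ∈ Icc m M := by
  refine isClosed_Icc.mem_of_tendsto (hd.tendsto_slope.mono_left (nhdsGT_le_nhdsNE x)) ?_
  filter_upwards [self_mem_nhdsWithin, nhdsWithin_le_nhds hs] with y (hxy : x < y) hy
  have h := hf x (mem_of_mem_nhds hs) y hy hxy.le
  rw [slope_def_field, mem_Icc, le_div_iff₀ (sub_pos.2 hxy), div_le_iff₀ (sub_pos.2 hxy)]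
  exact h

theorem ae_mem_Icc_of_ae_hasDerivAt {f' : ℝ → ℝ} {a b : ℝ} (hf : SlopeBoundedOn f (Icc a b) m M)
    (hd : ∀ᵐ x ∂volume.restrict (Icc a b), HasDerivAt f (f' x) x) :
    ∀ᵐ x ∂volume.restrict (Icc a b), f' x ∈ Icc m M := by
  filter_upwards [hd, ae_restrict_Icc_mem_Ioo a b] with x hx hxab
  exact hf.mem_Icc_of_hasDerivAt (Icc_mem_nhds hxab.1 hxab.2) hx

end SlopeBoundedOn

theorem neg_apply_of_leftInvOn {g h : ℝ → ℝ} {s t : Set ℝ} (hg : InjOn g t)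
    (hg_odd : ∀ y, g (-y) = -g y) (hs : ∀ x ∈ s, -x ∈ s) (ht : ∀ y ∈ t, -y ∈ t)
    (hh : MapsTo h s t) (hgh : LeftInvOn g h s) {x : ℝ} (hx : x ∈ s) : h (-x) = -h x :=
  hg (hh (hs x hx)) (ht _ (hh hx)) (by rw [hgh (hs x hx), hg_odd, hgh hx])

theorem StrictMonoOn.monotoneOn_of_leftInvOn {g h : ℝ → ℝ} {s t : Set ℝ} (hg : StrictMonoOn g t)
    (hh : MapsTo h s t) (hgh : LeftInvOn g h s) : MonotoneOn h s := fun x hx y hy hxy =>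
  (hg.le_iff_le (hh hx) (hh hy)).1 (by rwa [hgh hx, hgh hy])

theorem preimage_Icc_inter_eq {g h : ℝ → ℝ} {s t : Set ℝ} {α β : ℝ} (hg : StrictMonoOn g t)
    (hh : MapsTo h s t) (hgh : LeftInvOn g h s) (hα : α ∈ t) (hβ : β ∈ t) :
    h ⁻¹' Icc α β ∩ s = Icc (g α) (g β) ∩ s := by
  ext x
  simp only [mem_inter_iff, mem_preimage, mem_Icc]
  refine and_congr_left fun hx => ?_
  rw [← hg.le_iff_le hα (hh hx), ← hg.le_iff_le (hh hx) hβ, hgh hx]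

theorem restrict_abs_preimage_Iic {g h : ℝ → ℝ} {a b t : ℝ} (hg : StrictMonoOn g (Icc (-b) b))
    (hgI : MapsTo g (Icc (-b) b) (Icc (-a) a)) (hh : MapsTo h (Icc (-a) a) (Icc (-b) b))
    (hgh : LeftInvOn g h (Icc (-a) a)) (ht : t ∈ Icc 0 b) :
    volume.restrict (Icc (-a) a) ((fun x => |h x|) ⁻¹' Iic t) = ENNReal.ofReal (g t - g (-t)) := by
  have hpre : (fun x => |h x|) ⁻¹' Iic t = h ⁻¹' Icc (-t) t := by
    ext x
    simp [abs_le]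
  have htb : t ∈ Icc (-b) b := ⟨by linarith [ht.1, ht.2], ht.2⟩
  have hnt := neg_mem_Icc_neg_self htb
  rw [Measure.restrict_apply' measurableSet_Icc, hpre, preimage_Icc_inter_eq hg hh hgh hnt htb,
    inter_eq_left.2 (Icc_subset_Icc (hgI hnt).1 (hgI htb).2), Real.volume_Icc]

theorem measure_abs_preimage_Iic_of_neg (μ : Measure ℝ) (h : ℝ → ℝ) {t : ℝ} (ht : t < 0) :
    μ ((fun x => |h x|) ⁻¹' Iic t) = 0 := by
  convert measure_empty (μ := μ)
  exact eq_empty_of_forall_notMem fun x hx => ht.not_ge ((abs_nonneg (h x)).trans hx)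

theorem restrict_abs_preimage_Iic_of_le {h : ℝ → ℝ} {s : Set ℝ} {b t : ℝ}
    (hh : MapsTo h s (Icc (-b) b)) (hbt : b ≤ t) :
    volume.restrict s ((fun x => |h x|) ⁻¹' Iic t) = volume s := by
  rw [Measure.restrict_apply_superset]
  exact fun x hx => (abs_le.2 (hh hx)).trans hbt

theorem setIntegral_comp_eq_of_leftInvOn_oddPart {f finv fo G : ℝ → ℝ} {a b : ℝ}
    (hG : Measurable G) (hG_even : ∀ y, G (-y) = G y)
    (hfinv : StrictMonoOn finv (Icc (-b) b)) (hfinvI : MapsTo finv (Icc (-b) b) (Icc (-a) a))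
    (hf : MapsTo f (Icc (-a) a) (Icc (-b) b)) (hfinvf : LeftInvOn finv f (Icc (-a) a))
    (hg : StrictMonoOn (oddPart finv) (Icc (-b) b))
    (hgI : MapsTo (oddPart finv) (Icc (-b) b) (Icc (-a) a))
    (hfo : MapsTo fo (Icc (-a) a) (Icc (-b) b)) (hgfo : LeftInvOn (oddPart finv) fo (Icc (-a) a)) :
    ∫ x in Icc (-a) a, G (fo x) = ∫ x in Icc (-a) a, G (f x) := by
  have hG_abs (y : ℝ) : G |y| = G y := by
    rcases abs_choice y with h | h <;> simp only [h, hG_even]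
  have hmeas {h : ℝ → ℝ} (hh : MonotoneOn h (Icc (-a) a)) :
      AEMeasurable (fun x => |h x|) (volume.restrict (Icc (-a) a)) :=
    continuous_abs.measurable.comp_aemeasurable
      (aemeasurable_restrict_of_monotoneOn measurableSet_Icc hh)
  have hdist (t : ℝ) : volume.restrict (Icc (-a) a) ((fun x => |f x|) ⁻¹' Iic t) =
      volume.restrict (Icc (-a) a) ((fun x => |fo x|) ⁻¹' Iic t) := by
    rcases lt_or_ge t 0 with ht | ht
    · rw [measure_abs_preimage_Iic_of_neg _ _ ht, measure_abs_preimage_Iic_of_neg _ _ ht]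
    rcases le_or_gt b t with hbt | htb
    · rw [restrict_abs_preimage_Iic_of_le hf hbt, restrict_abs_preimage_Iic_of_le hfo hbt]
    rw [restrict_abs_preimage_Iic hfinv hfinvI hf hfinvf ⟨ht, htb.le⟩,
      restrict_abs_preimage_Iic hg hgI hfo hgfo ⟨ht, htb.le⟩, oddPart_neg]
    congr 1
    simp only [oddPart]
    ring
  calc ∫ x in Icc (-a) a, G (fo x) = ∫ x in Icc (-a) a, G |fo x| := by simp only [hG_abs]
    _ = ∫ x in Icc (-a) a, G |f x| :=
      (integral_comp_eq_of_measure_preimage_Iic_eq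
        (hmeas (hfinv.monotoneOn_of_leftInvOn hf hfinvf))
        (hmeas (hg.monotoneOn_of_leftInvOn hfo hgfo)) hG hdist).symm
    _ = ∫ x in Icc (-a) a, G (f x) := by simp only [hG_abs]

theorem stmt11 (a : ℝ) (ha : 0 < a)
    (G : ℝ → ℝ) (hGc : Continuous G) (hGeven : ∀ y, G (-y) = G y)
    (f finv fo f' fo' : ℝ → ℝ) (Cf : NNReal)
    (hflip : LipschitzOnWith Cf f (Set.Icc (-a) a))
    (hessinf : 0 < essInf f' (volume.restrict (Set.Icc (-a) a)))
    (hf' : ∀ᵐ x ∂(volume.restrict (Set.Icc (-a) a)), HasDerivAt f (f' x) x)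
    (hfa : f (-a) = -(f a))
    (hinv1 : ∀ x ∈ Set.Icc (-a) a, finv (f x) = x)
    (hinv2 : ∀ y ∈ Set.Icc (-(f a)) (f a), f (finv y) = y)
    -- `fo` is the inverse of `g = (1/2) f⁻¹ + (1/2) (f⁻¹)_*`
    (hfo : ∀ x ∈ Set.Icc (-a) a, (finv (fo x) - finv (-(fo x))) / 2 = x)
    (hfomaps : ∀ x ∈ Set.Icc (-a) a, fo x ∈ Set.Icc (-(f a)) (f a))
    (hfo' : ∀ᵐ x ∂(volume.restrict (Set.Icc (-a) a)), HasDerivAt fo (fo' x) x) :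
    (∫ x in (-a)..a, G (fo x)) = (∫ x in (-a)..a, G (f x)) ∧
    (∀ x ∈ Set.Icc (-a) a, fo (-x) = -(fo x)) ∧
    fo a = f a ∧
    essInf f' (volume.restrict (Set.Icc (-a) a))
      ≤ essInf fo' (volume.restrict (Set.Icc (-a) a)) ∧
    essSup fo' (volume.restrict (Set.Icc (-a) a))
      ≤ essSup f' (volume.restrict (Set.Icc (-a) a)) := by
  have ha_mem : a ∈ Icc (-a) a := ⟨by linarith, le_rfl⟩
  set μ := volume.restrict (Icc (-a) a)
  set m := essInf f' μ
  set M := essSup f' μ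
  have hf_slope := SlopeBoundedOn.of_lipschitzOnWith hflip hf'
    (ae_mem_Icc_essInf_essSup_of_ae_abs_le (hflip.ae_abs_le_of_hasDerivAt hf'))
  have hM : 0 < M := by
    nlinarith [hf_slope (-a) (neg_mem_Icc_neg_self ha_mem) a ha_mem (by linarith)]
  have hfJ : MapsTo f (Icc (-a) a) (Icc (-(f a)) (f a)) :=
    hfa ▸ (hf_slope.strictMonoOn hessinf).monotoneOn.mapsTo_Icc
  have hfinvI : MapsTo finv (Icc (-(f a)) (f a)) (Icc (-a) a) :=
    LeftInvOn.mapsTo hinv1 (hfa ▸ intermediate_value_Icc (by linarith) hflip.continuousOn)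
  have hfinv_slope := hf_slope.rightInvOn hessinf hM hfinvI hinv2
  have hg_slope := hfinv_slope.oddPart fun _ => neg_mem_Icc_neg_self
  have hg_mono := hg_slope.strictMonoOn (inv_pos.2 hM)
  have hfo_slope : SlopeBoundedOn fo (Icc (-a) a) m M := by
    simpa only [inv_inv] using hg_slope.rightInvOn (inv_pos.2 hM) (inv_pos.2 hessinf) hfomaps hfo
  have hg_fa : oddPart finv (f a) = a := by
    rw [oddPart, hinv1 a ha_mem, ← hfa, hinv1 (-a) (neg_mem_Icc_neg_self ha_mem)]
    ring
  have hgI : MapsTo (oddPart finv) (Icc (-(f a)) (f a)) (Icc (-a) a) := by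
    simpa only [oddPart_neg, hg_fa] using hg_mono.monotoneOn.mapsTo_Icc
  have : NeZero (volume (Icc (-a) a)) := ⟨by simp [Real.volume_Icc, ha]⟩
  refine ⟨?_, fun x hx => neg_apply_of_leftInvOn hg_mono.injOn (oddPart_neg finv)
      (fun _ => neg_mem_Icc_neg_self) (fun _ => neg_mem_Icc_neg_self) hfomaps hfo hx,
    hg_mono.injOn (hfomaps a ha_mem) (hfJ ha_mem) (by rw [hg_fa]; exact hfo a ha_mem),
    le_essInf_and_essSup_le_of_ae_mem_Icc (hfo_slope.ae_mem_Icc_of_ae_hasDerivAt hfo')⟩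
  rw [intervalIntegral.integral_of_le (by linarith), intervalIntegral.integral_of_le (by linarith),
    ← integral_Icc_eq_integral_Ioc, ← integral_Icc_eq_integral_Ioc]
  exact setIntegral_comp_eq_of_leftInvOn_oddPart hGc.measurable hGeven
    (hfinv_slope.strictMonoOn (inv_pos.2 hM)) hfinvI hfJ hinv1 hg_mono hgI hfomaps hfo
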